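/- In the discrete uncorrelated reduction instance, suppose W is a subset sum, i.e., there exists S ⊆ {1,…,m} with Σ_{i∈S} w_i = W. Then f(W) > f(W + 2ε); in particular, b = W + 2ε is not a maximizer of f over [W, W + 2ε]. Moreover, f(W + 2ε) = −M − W + ε²/M. -/

import Mathlib

noncomputable section

/-- Feasibility for the follower's continuous knapsack problem. -/
def feasibleKP {n : ℕ} (a : Fin n → ℝ) (b : ℝ) (x : Fin n → ℝ) : Prop :=
  (∑ i, a i * x i) ≤ b ∧ ∀ i, 0 ≤ x i ∧ x i ≤ 1

/-- Optimality for the follower's continuous knapsack problem with profits `c`. -/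
def optimalKP {n : ℕ} (a c : Fin n → ℝ) (b : ℝ) (x : Fin n → ℝ) : Prop :=
  feasibleKP a b x ∧ ∀ y, feasibleKP a b y → ∑ i, c i * y i ≤ ∑ i, c i * x i

/-- The constant `ε = 1/4` of the reduction instance. -/
def eps : ℝ := 1 / 4

/-- The constant `M = ∑ wᵢ + ε` of the reduction instance. -/
def Mval (m : ℕ) (w : Fin m → ℤ) : ℝ := (∑ i, (w i : ℝ)) + eps

/-- Item sizes `a = (ε, w₁, …, w_m, M)` of the reduction instance. -/
def avec (m : ℕ) (w : Fin m → ℤ) : Fin (m + 2) → ℝ := fun i =>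
  if h0 : (i : ℕ) = 0 then eps
  else if h1 : (i : ℕ) = m + 1 then Mval m w
  else (w ⟨(i : ℕ) - 1, by have := i.isLt; omega⟩ : ℝ)

/-- Leader's item values `d = (−M, −w₁, …, −w_m, ε)` of the reduction instance. -/
def dvec (m : ℕ) (w : Fin m → ℤ) : Fin (m + 2) → ℝ := fun i =>
  if h0 : (i : ℕ) = 0 then -Mval m w
  else if h1 : (i : ℕ) = m + 1 then eps
  else -(w ⟨(i : ℕ) - 1, by have := i.isLt; omega⟩ : ℝ)

/-- Membership in the discrete uncorrelated uncertainty set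
`U = ∏_{i=1}^{n} {i·aᵢ, (n+i)·aᵢ}` (with `n = m + 2` and 1-based indices). -/
def inU (m : ℕ) (w : Fin m → ℤ) (c : Fin (m + 2) → ℝ) : Prop :=
  ∀ i : Fin (m + 2),
    c i = ((i : ℕ) + 1) * avec m w i ∨ c i = ((m + 2) + ((i : ℕ) + 1)) * avec m w i

/-- The leader's objective `f(b) = min_{c ∈ U} min { dᵀx : x optimal for c }`
of the reduction instance (pessimistic view). -/
def fval (m : ℕ) (w : Fin m → ℤ) (b : ℝ) : ℝ :=
  sInf {v : ℝ | ∃ c x : Fin (m + 2) → ℝ,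
    inU m w c ∧ optimalKP (avec m w) c b x ∧ v = ∑ i, dvec m w i * x i}

/-- `V` is a subset sum of `{w₁, …, w_m}`. -/
def isSubsetSum (m : ℕ) (w : Fin m → ℤ) (V : ℝ) : Prop :=
  ∃ S : Finset (Fin m), V = ∑ i ∈ S, (w i : ℝ)

/-! The follower solves a fractional knapsack, so an optimal `x` is greedy in the profit ratios
`cᵢ / aᵢ` (an exchange argument), and conversely a greedy `x` that exhausts the budget is optimal
(a threshold certificate). At budget `W + 2ε` the leader's value is `-M x₀ - ∑ wⱼ xⱼ + ε xₙ`.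
If `x₀ = 0` or `xₙ ≥ ε / M`, the budget constraint alone bounds it below by `-M - W + ε² / M`.
Otherwise `x₀ > 0` and `xₙ < 1` force ratio `m + 3` on item `0` and `m + 2` on the last item;
then every middle item is packed fully or not at all, and the tight budget puts the integer
`∑ wⱼ xⱼ` strictly between `W` and `W + 1`. When `W = ∑_{j ∈ S} wⱼ` the bound is attained by
packing item `0` and `S` fully and `ε / M` of the last item. At budget `W`, feasibility alone
gives `f(W) ≥ -M - W + ε`. -/

lemma sum_mul_add_single {ι R : Type*} [Fintype ι] [DecidableEq ι] [Semiring R]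
    (g x : ι → R) (j : ι) (t : R) :
    ∑ k, g k * (x + Pi.single j t : ι → R) k = ∑ k, g k * x k + g j * t := by
  simp [mul_add, Finset.sum_add_distrib, Pi.single_apply]

lemma forall_fin_add_two {m : ℕ} {P : Fin (m + 2) → Prop} :
    (∀ i, P i) ↔ P 0 ∧ (∀ j : Fin m, P j.castSucc.succ) ∧ P (Fin.last (m + 1)) := by
  rw [Fin.forall_fin_succ, Fin.forall_fin_succ', Fin.succ_last]

lemma sum_fin_add_two {m : ℕ} {M : Type*} [AddCommMonoid M] (f : Fin (m + 2) → M) :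
    ∑ i, f i = f 0 + ∑ j : Fin m, f j.castSucc.succ + f (Fin.last (m + 1)) := by
  rw [Fin.sum_univ_succ, Fin.sum_univ_castSucc, Fin.succ_last, ← add_assoc]

namespace optimalKP

variable {n : ℕ} {a c x : Fin n → ℝ} {b : ℝ}

lemma sum_eq_budget (ha : ∀ i, 0 < a i) (hc : ∀ i, 0 < c i) (hb : b < ∑ i, a i)
    (hx : optimalKP a c b x) : ∑ i, a i * x i = b := by
  obtain ⟨⟨hxb, hbox⟩, hmax⟩ := hx
  by_contra hne
  have hslack : 0 < b - ∑ i, a i * x i := sub_pos.2 (hxb.lt_of_ne hne)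
  obtain ⟨j, hj⟩ : ∃ j, x j < 1 := by
    by_contra! h
    have hx1 : ∀ i, x i = 1 := fun i => le_antisymm (hbox i).2 (h i)
    simp only [hx1, mul_one] at hslack
    linarith
  set t := min (1 - x j) ((b - ∑ i, a i * x i) / a j)
  have ht : 0 < t := lt_min (by linarith) (div_pos hslack (ha j))
  have hty : a j * t ≤ b - ∑ i, a i * x i := by
    rw [mul_comm, ← le_div_iff₀ (ha j)]; exact min_le_right _ _
  have hy : feasibleKP a b (x + Pi.single j t) := by
    refine ⟨by rw [sum_mul_add_single]; linarith, fun i => ?_⟩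
    rcases eq_or_ne i j with rfl | hij
    · have : t ≤ 1 - x i := min_le_left _ _
      simp only [Pi.add_apply, Pi.single_eq_same]
      constructor <;> linarith [(hbox i).1]
    · simpa [Pi.single_eq_of_ne hij] using hbox i
  have := hmax _ hy
  rw [sum_mul_add_single] at this
  nlinarith [mul_pos (hc j) ht]

lemma eq_one_of_div_lt (ha : ∀ k, 0 < a k) (hx : optimalKP a c b x) {i j : Fin n}
    (hij : c i / a i < c j / a j) (hxi : 0 < x i) : x j = 1 := by
  obtain ⟨⟨hxb, hbox⟩, hmax⟩ := hx
  by_contra hne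
  have hxj : x j < 1 := (hbox j).2.lt_of_ne hne
  have hne : i ≠ j := by rintro rfl; exact lt_irrefl _ hij
  set δ := min (a i * x i) (a j * (1 - x j))
  have hδ : 0 < δ := lt_min (mul_pos (ha i) hxi) (mul_pos (ha j) (by linarith))
  have hδi : δ / a i ≤ x i := by
    rw [div_le_iff₀ (ha i), mul_comm]; exact min_le_left _ _
  have hδj : δ / a j ≤ 1 - x j := by
    rw [div_le_iff₀ (ha j), mul_comm]; exact min_le_right _ _
  set y := x + Pi.single j (δ / a j) + Pi.single i (-(δ / a i))
  have hsum : ∀ g : Fin n → ℝ,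
      ∑ k, g k * y k = ∑ k, g k * x k + δ * (g j / a j) - δ * (g i / a i) := by
    intro g
    simp only [y, sum_mul_add_single]
    ring
  have hy : feasibleKP a b y := by
    refine ⟨?_, fun k => ?_⟩
    · rw [hsum, div_self (ha j).ne', div_self (ha i).ne']
      linarith
    · have := hbox k
      have := div_pos hδ (ha i)
      have := div_pos hδ (ha j)
      simp only [y, Pi.add_apply, Pi.single_apply]
      split_ifs <;> subst_vars <;> constructor <;> linarith
  have := hmax y hy
  rw [hsum] at this
  nlinarith [mul_lt_mul_of_pos_left hij hδ]

lemma of_div_threshold (ha : ∀ i, 0 < a i) {μ : ℝ} (hμ : 0 ≤ μ)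
    (hx : feasibleKP a b x) (htight : ∑ i, a i * x i = b)
    (hone : ∀ i, μ < c i / a i → x i = 1) (hzero : ∀ i, c i / a i < μ → x i = 0) :
    optimalKP a c b x := by
  refine ⟨hx, fun y hy => ?_⟩
  have hterm : ∀ i, (c i - μ * a i) * (y i - x i) ≤ 0 := by
    intro i
    rcases lt_trichotomy (c i / a i) μ with h | h | h
    · have h' : c i - μ * a i < 0 := by rw [div_lt_iff₀ (ha i)] at h; linarith
      rw [hzero i h]; nlinarith [(hy.2 i).1]
    · rw [div_eq_iff (ha i).ne'] at h; simp [h]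
    · have h' : 0 < c i - μ * a i := by rw [lt_div_iff₀ (ha i)] at h; linarith
      rw [hone i h]; nlinarith [(hy.2 i).2]
  have hsplit : ∑ i, c i * y i - ∑ i, c i * x i
      = ∑ i, (c i - μ * a i) * (y i - x i) + μ * (∑ i, a i * y i - ∑ i, a i * x i) := by
    simp only [← Finset.sum_sub_distrib, Finset.mul_sum, ← Finset.sum_add_distrib]
    exact Finset.sum_congr rfl fun i _ => by ring
  have := Finset.sum_nonpos fun i (_ : i ∈ Finset.univ) => hterm i
  nlinarith [hy.1]

end optimalKP

lemma exists_intCast_eq_sum_mul {ι : Type*} [Fintype ι] (w : ι → ℤ) {y : ι → ℝ}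
    (hy : ∀ j, y j = 0 ∨ y j = 1) : ∃ k : ℤ, ∑ j, (w j : ℝ) * y j = k := by
  classical
  refine ⟨∑ j with y j = 1, w j, ?_⟩
  push_cast
  rw [Finset.sum_filter]
  refine Finset.sum_congr rfl fun j _ => ?_
  rcases hy j with h | h <;> simp [h]

section Instance

variable {m : ℕ} {w : Fin m → ℤ} {W : ℤ}

@[simp] lemma avec_zero : avec m w 0 = eps := by simp [avec]
@[simp] lemma avec_mid (j : Fin m) : avec m w j.castSucc.succ = w j := by simp [avec, j.isLt.ne]
@[simp] lemma avec_last : avec m w (Fin.last (m + 1)) = Mval m w := by simp [avec]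
@[simp] lemma dvec_zero : dvec m w 0 = -Mval m w := by simp [dvec]
@[simp] lemma dvec_mid (j : Fin m) : dvec m w j.castSucc.succ = -w j := by simp [dvec, j.isLt.ne]
@[simp] lemma dvec_last : dvec m w (Fin.last (m + 1)) = eps := by simp [dvec]

lemma eps_pos : 0 < eps := by norm_num [eps]

lemma sum_w_nonneg (hw : ∀ i, 1 ≤ w i) : 0 ≤ ∑ i, (w i : ℝ) :=
  Finset.sum_nonneg fun i _ => by exact_mod_cast (zero_lt_one.trans_le (hw i)).le

lemma eps_le_Mval (hw : ∀ i, 1 ≤ w i) : eps ≤ Mval m w := by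
  simp only [Mval]; linarith [sum_w_nonneg hw]

lemma Mval_pos (hw : ∀ i, 1 ≤ w i) : 0 < Mval m w := eps_pos.trans_le (eps_le_Mval hw)

lemma avec_pos (hw : ∀ i, 1 ≤ w i) : ∀ i, 0 < avec m w i := by
  refine forall_fin_add_two.2 ⟨?_, fun j => ?_, ?_⟩
  · simpa using eps_pos
  · simpa using zero_lt_one.trans_le (hw j)
  · simpa using Mval_pos hw

lemma sum_avec_mul (x : Fin (m + 2) → ℝ) :
    ∑ i, avec m w i * x i
      = eps * x 0 + ∑ j : Fin m, (w j : ℝ) * x j.castSucc.succ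
        + Mval m w * x (Fin.last (m + 1)) := by
  simp [sum_fin_add_two]

lemma sum_dvec_mul (x : Fin (m + 2) → ℝ) :
    ∑ i, dvec m w i * x i
      = -Mval m w * x 0 - ∑ j : Fin m, (w j : ℝ) * x j.castSucc.succ
        + eps * x (Fin.last (m + 1)) := by
  simp [sum_fin_add_two, sub_eq_add_neg]

namespace inU

variable {c : Fin (m + 2) → ℝ}

lemma div_avec (hw : ∀ i, 1 ≤ w i) (hc : inU m w c) (i : Fin (m + 2)) :
    c i / avec m w i = (i : ℕ) + 1 ∨ c i / avec m w i = m + 2 + ((i : ℕ) + 1) := by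
  have := (avec_pos hw i).ne'
  rcases hc i with h | h <;> simp [h, this]

lemma pos (hw : ∀ i, 1 ≤ w i) (hc : inU m w c) (i : Fin (m + 2)) : 0 < c i := by
  have hdiv : 0 < c i / avec m w i := by
    rcases hc.div_avec hw i with h | h <;> rw [h] <;> positivity
  simpa [(avec_pos hw i).ne'] using mul_pos hdiv (avec_pos hw i)

end inU

lemma add_one_add_eps_le_Mval (hW2 : W ≤ (∑ i, w i) - 1) :
    (W : ℝ) + 1 + eps ≤ Mval m w := by
  have : ((W + 1 : ℤ) : ℝ) ≤ ((∑ i, w i : ℤ) : ℝ) := by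
    exact_mod_cast (by linarith : W + 1 ≤ ∑ i, w i)
  push_cast at this
  simp only [Mval]; linarith

lemma mid_eq_zero_or_one_of_optimal (hw : ∀ i, 1 ≤ w i) {b : ℝ} {c x : Fin (m + 2) → ℝ}
    (hc : inU m w c) (hx : optimalKP (avec m w) c b x) (hx0 : 0 < x 0)
    (hxL : x (Fin.last (m + 1)) ≠ 1) (j : Fin m) :
    x j.castSucc.succ = 0 ∨ x j.castSucc.succ = 1 := by
  have ha := avec_pos hw
  have hm : (0 : ℝ) ≤ m := m.cast_nonneg
  have hfirst : c 0 / avec m w 0 = m + 3 := by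
    rcases hc.div_avec hw 0 with h | h
    · refine absurd (hx.eq_one_of_div_lt ha ?_ hx0) hxL
      rw [h]; rcases hc.div_avec hw (Fin.last (m + 1)) with h' | h' <;>
        · rw [h']; push_cast [Fin.val_zero, Fin.val_last]; linarith
    · rw [h]; push_cast [Fin.val_zero]; ring
  have hlast : c (Fin.last (m + 1)) / avec m w (Fin.last (m + 1)) = m + 2 := by
    rcases hc.div_avec hw (Fin.last (m + 1)) with h | h
    · rw [h]; push_cast [Fin.val_last]; ring
    · refine absurd (hx.eq_one_of_div_lt ha ?_ hx0) hxL
      rw [h, hfirst]; push_cast [Fin.val_last]; linarith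
  have hj : (j : ℝ) < m := by exact_mod_cast j.isLt
  rcases hc.div_avec hw j.castSucc.succ with h | h
  · left
    by_contra hne
    refine hxL (hx.eq_one_of_div_lt ha ?_ ((hx.1.2 _).1.lt_of_ne' hne))
    rw [h, hlast]; push_cast [Fin.val_succ, Fin.val_castSucc]; linarith
  · right
    refine hx.eq_one_of_div_lt ha ?_ hx0
    rw [h, hfirst]; push_cast [Fin.val_succ, Fin.val_castSucc]; linarith

lemma eq_zero_or_div_le_of_optimal (hw : ∀ i, 1 ≤ w i) (hW2 : W ≤ (∑ i, w i) - 1)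
    {c x : Fin (m + 2) → ℝ} (hc : inU m w c) (hx : optimalKP (avec m w) c (W + 2 * eps) x) :
    x 0 = 0 ∨ eps / Mval m w ≤ x (Fin.last (m + 1)) := by
  by_contra! ⟨hx0, hxL⟩
  have hbox := hx.1.2
  have hM := add_one_add_eps_le_Mval hW2
  have hMpos : 0 < Mval m w := Mval_pos hw
  have hx0 : 0 < x 0 := (hbox 0).1.lt_of_ne' hx0
  have hxL1 : x (Fin.last (m + 1)) ≠ 1 := by
    refine (hxL.trans_le ?_).ne
    rw [div_le_one hMpos]; exact eps_le_Mval hw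
  obtain ⟨k, hk⟩ :=
    exists_intCast_eq_sum_mul w (mid_eq_zero_or_one_of_optimal hw hc hx hx0 hxL1)
  have hb : (W : ℝ) + 2 * eps < ∑ i, avec m w i := by
    rw [sum_fin_add_two]; simp only [avec_zero, avec_mid, avec_last]
    simp only [Mval] at hM ⊢; linarith [eps_pos, sum_w_nonneg hw]
  have htight := hx.sum_eq_budget (avec_pos hw) (hc.pos hw) hb
  rw [sum_avec_mul, hk] at htight
  have hx0' : eps * x 0 ≤ eps := mul_le_of_le_one_right eps_pos.le (hbox 0).2
  have hxL' : Mval m w * x (Fin.last (m + 1)) < eps := by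
    rw [lt_div_iff₀ hMpos] at hxL; linarith
  have hxL0 : 0 ≤ Mval m w * x (Fin.last (m + 1)) := mul_nonneg hMpos.le (hbox _).1
  have heps : eps = 1 / 4 := rfl
  have hk1 : (W : ℝ) < k := by linarith
  have hk2 : (k : ℝ) < W + 1 := by linarith [mul_pos eps_pos hx0]
  norm_cast at hk1 hk2
  omega

lemma le_sum_dvec_mul_of_feasible (hw : ∀ i, 1 ≤ w i) {x : Fin (m + 2) → ℝ}
    (hx : feasibleKP (avec m w) W x) : -Mval m w - W + eps ≤ ∑ i, dvec m w i * x i := by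
  obtain ⟨hxb, hbox⟩ := hx
  rw [sum_avec_mul] at hxb
  rw [sum_dvec_mul]
  have h0 : (Mval m w - eps) * x 0 ≤ Mval m w - eps :=
    mul_le_of_le_one_right (sub_nonneg.2 (eps_le_Mval hw)) (hbox 0).2
  have hL := mul_nonneg (Mval_pos hw).le (hbox (Fin.last (m + 1))).1
  have hL' := mul_nonneg eps_pos.le (hbox (Fin.last (m + 1))).1
  linarith

lemma le_sum_dvec_mul_of_optimal (hw : ∀ i, 1 ≤ w i) (hW1 : 1 ≤ W)
    (hW2 : W ≤ (∑ i, w i) - 1)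
    {c x : Fin (m + 2) → ℝ} (hc : inU m w c) (hx : optimalKP (avec m w) c (W + 2 * eps) x) :
    -Mval m w - W + eps ^ 2 / Mval m w ≤ ∑ i, dvec m w i * x i := by
  have hbox := hx.1.2
  have hxb := hx.1.1
  rw [sum_avec_mul] at hxb
  rw [sum_dvec_mul]
  have hM := add_one_add_eps_le_Mval hW2
  have hMpos : 0 < Mval m w := Mval_pos hw
  have hW1' : (1 : ℝ) ≤ W := by exact_mod_cast hW1
  have hsq : eps ^ 2 / Mval m w ≤ eps := by
    rw [div_le_iff₀ hMpos, sq]; exact mul_le_mul_of_nonneg_left (eps_le_Mval hw) eps_pos.le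
  have hL := mul_nonneg hMpos.le (hbox (Fin.last (m + 1))).1
  have hL' := mul_nonneg eps_pos.le (hbox (Fin.last (m + 1))).1
  rcases eq_zero_or_div_le_of_optimal hw hW2 hc hx with h | h
  · have heps : eps = 1 / 4 := rfl
    rw [h] at hxb ⊢
    linarith
  · have h1 : eps ≤ Mval m w * x (Fin.last (m + 1)) := by rwa [div_le_iff₀' hMpos] at h
    have h2 : eps ^ 2 / Mval m w ≤ eps * x (Fin.last (m + 1)) := by
      rw [sq, mul_div_assoc]; exact mul_le_mul_of_nonneg_left h eps_pos.le
    have h0 : (Mval m w - eps) * x 0 ≤ Mval m w - eps :=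
      mul_le_of_le_one_right (sub_nonneg.2 (eps_le_Mval hw)) (hbox 0).2
    nlinarith [mul_nonneg eps_pos.le (hbox 0).1]

-- The profit ratios `c / a` of the optimum: high on item `0` and on `S`, low elsewhere, so that
-- at the threshold `m + 2` the last item is the only fractional one.
def witnessRatio (S : Finset (Fin m)) : Fin (m + 2) → ℝ :=
  Fin.cons (m + 3 : ℝ)
    (Fin.snoc (fun j : Fin m => if j ∈ S then (m + j + 4 : ℝ) else j + 2) (m + 2))

def witnessPacking (w : Fin m → ℤ) (S : Finset (Fin m)) : Fin (m + 2) → ℝ :=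
  Fin.cons 1 (Fin.snoc (fun j : Fin m => if j ∈ S then 1 else 0) (eps / Mval m w))

section Witness

variable (S : Finset (Fin m))

@[simp] lemma witnessRatio_zero : witnessRatio S 0 = m + 3 := by simp [witnessRatio]
@[simp] lemma witnessRatio_mid (j : Fin m) :
    witnessRatio S j.castSucc.succ = if j ∈ S then (m + j + 4 : ℝ) else j + 2 := by
  simp [witnessRatio]
@[simp] lemma witnessRatio_last : witnessRatio S (Fin.last (m + 1)) = m + 2 := by
  simp [witnessRatio]
@[simp] lemma witnessPacking_zero : witnessPacking w S 0 = 1 := by simp [witnessPacking]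
@[simp] lemma witnessPacking_mid (j : Fin m) :
    witnessPacking w S j.castSucc.succ = if j ∈ S then 1 else 0 := by simp [witnessPacking]
@[simp] lemma witnessPacking_last :
    witnessPacking w S (Fin.last (m + 1)) = eps / Mval m w := by simp [witnessPacking]

lemma inU_witnessRatio_mul : inU m w fun i => witnessRatio S i * avec m w i := by
  refine forall_fin_add_two.2 ⟨?_, fun j => ?_, ?_⟩
  · right; dsimp only; rw [witnessRatio_zero]; push_cast [Fin.val_zero]; ring
  · by_cases hj : j ∈ S
    · right; dsimp only; rw [witnessRatio_mid, if_pos hj]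
      push_cast [Fin.val_succ, Fin.val_castSucc]; ring
    · left; dsimp only; rw [witnessRatio_mid, if_neg hj]
      push_cast [Fin.val_succ, Fin.val_castSucc]; ring
  · left; dsimp only; rw [witnessRatio_last]; push_cast [Fin.val_last]; ring

variable {S}

lemma sum_mul_witnessPacking_mid (hS : (W : ℝ) = ∑ j ∈ S, (w j : ℝ)) :
    ∑ j : Fin m, (w j : ℝ) * witnessPacking w S j.castSucc.succ = W := by
  simp [hS, mul_ite, Finset.sum_ite_mem]

lemma optimalKP_witnessPacking (hw : ∀ i, 1 ≤ w i) (hS : (W : ℝ) = ∑ j ∈ S, (w j : ℝ)) :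
    optimalKP (avec m w) (fun i => witnessRatio S i * avec m w i) (W + 2 * eps)
      (witnessPacking w S) := by
  have hMpos : 0 < Mval m w := Mval_pos hw
  have hm : (0 : ℝ) ≤ m := m.cast_nonneg
  have htight : ∑ i, avec m w i * witnessPacking w S i = W + 2 * eps := by
    rw [sum_avec_mul, sum_mul_witnessPacking_mid hS, witnessPacking_zero, witnessPacking_last,
      mul_div_cancel₀ _ hMpos.ne']
    ring
  have hdiv (i : Fin (m + 2)) : witnessRatio S i * avec m w i / avec m w i = witnessRatio S i :=
    mul_div_cancel_right₀ _ (avec_pos hw i).ne'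
  refine optimalKP.of_div_threshold (avec_pos hw) (μ := m + 2) (by positivity)
    ⟨htight.le, ?_⟩ htight ?_ ?_
  · refine forall_fin_add_two.2 ⟨by simp, fun j => ?_, ?_⟩
    · by_cases hj : j ∈ S <;> simp [hj]
    · rw [witnessPacking_last, div_le_one hMpos]
      exact ⟨div_nonneg eps_pos.le hMpos.le, eps_le_Mval hw⟩
  · simp only [hdiv]
    refine forall_fin_add_two.2 ⟨fun _ => witnessPacking_zero S, fun j => ?_, ?_⟩
    · by_cases hj : j ∈ S
      · simp [hj]
      · have : (j : ℝ) < m := by exact_mod_cast j.isLt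
        rw [witnessRatio_mid, if_neg hj]; intro; linarith
    · rw [witnessRatio_last]; intro h; exact absurd h (lt_irrefl _)
  · simp only [hdiv]
    refine forall_fin_add_two.2 ⟨?_, fun j => ?_, ?_⟩
    · rw [witnessRatio_zero]; intro; linarith
    · by_cases hj : j ∈ S
      · rw [witnessRatio_mid, if_pos hj]; intro; linarith [(j : ℕ).cast_nonneg (α := ℝ)]
      · simp [hj]
    · rw [witnessRatio_last]; intro h; exact absurd h (lt_irrefl _)

lemma sum_dvec_mul_witnessPacking (hS : (W : ℝ) = ∑ j ∈ S, (w j : ℝ)) :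
    ∑ i, dvec m w i * witnessPacking w S i = -Mval m w - W + eps ^ 2 / Mval m w := by
  rw [sum_dvec_mul, sum_mul_witnessPacking_mid hS, witnessPacking_zero, witnessPacking_last]
  ring

end Witness

lemma fval_add_two_eps_eq (hw : ∀ i, 1 ≤ w i) (hW1 : 1 ≤ W) (hW2 : W ≤ (∑ i, w i) - 1)
    (hyes : isSubsetSum m w W) :
    fval m w (W + 2 * eps) = -Mval m w - W + eps ^ 2 / Mval m w := by
  obtain ⟨S, hS⟩ := hyes
  refine IsLeast.csInf_eq ⟨⟨_, _, inU_witnessRatio_mul S, optimalKP_witnessPacking hw hS,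
    (sum_dvec_mul_witnessPacking hS).symm⟩, ?_⟩
  rintro v ⟨c, x, hc, hx, rfl⟩
  exact le_sum_dvec_mul_of_optimal hw hW1 hW2 hc hx

lemma le_fval (hw : ∀ i, 1 ≤ w i) (hW1 : 1 ≤ W) : -Mval m w - W + eps ≤ fval m w W := by
  refine Real.le_sInf ?_ ?_
  · rintro v ⟨c, x, -, hx, rfl⟩
    exact le_sum_dvec_mul_of_feasible hw hx.1
  · have : (1 : ℝ) ≤ W := by exact_mod_cast hW1
    simp only [Mval]; linarith [sum_w_nonneg hw]

end Instance

/-- If `W` is a subset sum, then in the discrete uncorrelated reduction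
instance `f(W) > f(W + 2ε)`, so `W + 2ε` is not a maximizer of `f` over
`[W, W + 2ε]`; moreover `f(W + 2ε) = −M − W + ε²/M`. -/
theorem discrete_uncorrelated_yes_instance
    (m : ℕ) (w : Fin m → ℤ) (W : ℤ) (hw : ∀ i, 1 ≤ w i)
    (hW1 : 1 ≤ W) (hW2 : W ≤ (∑ i, w i) - 1)
    (hyes : isSubsetSum m w (W : ℝ)) :
    fval m w ((W : ℝ) + 2 * eps) < fval m w (W : ℝ) ∧
    ¬ IsMaxOn (fval m w) (Set.Icc (W : ℝ) ((W : ℝ) + 2 * eps))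
        ((W : ℝ) + 2 * eps) ∧
    fval m w ((W : ℝ) + 2 * eps) = -Mval m w - W + eps ^ 2 / Mval m w := by
  have hval := fval_add_two_eps_eq hw hW1 hW2 hyes
  have hMpos : 0 < Mval m w := Mval_pos hw
  have hsq : eps ^ 2 / Mval m w < eps := by
    rw [div_lt_iff₀ hMpos, sq]
    refine mul_lt_mul_of_pos_left ?_ eps_pos
    have := add_one_add_eps_le_Mval hW2
    have : (1 : ℝ) ≤ W := by exact_mod_cast hW1
    linarith
  have hlt : fval m w (W + 2 * eps) < fval m w W := by
    rw [hval]; linarith [le_fval hw hW1]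
  refine ⟨hlt, fun hmax => ?_, hval⟩
  linarith [isMaxOn_iff.1 hmax W ⟨le_rfl, by linarith [eps_pos]⟩]

end
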